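/- Let 𝒢 = {A_1, …, A_k} ⊂ UT(4,ℤ) with A_i = UT(α_i, β_i, κ_i; δ_i, ε_i, φ_i). Suppose the ℝ-linear span of φ0(A_1), …, φ0(A_k) in ℝ³ has dimension 2, and let p, q, r ∈ ℤ, not all zero, satisfy p α_i + q β_i + r κ_i = 0 for i = 1, …, k. If a product P = B_1 ⋯ B_m of elements of 𝒢 lies in U_2, then its exponent vector ℓ = (ℓ_1, …, ℓ_k) satisfies Σ_{i=1}^k ℓ_i φ0(A_i) = 0 and p Σ_{i=1}^k ℓ_i Δ_i − r Σ_{i=1}^k ℓ_i ℰ_i = 0 (i.e., ℓ ∈ L_0). -/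
import Mathlib


open Finset

/-- The 4×4 upper unitriangular integer matrix `UT(a,b,c;d,e,f)`. -/
def UT (a b c d e f : ℤ) : Matrix (Fin 4) (Fin 4) ℤ :=
  !![1, a, d, f; 0, 1, b, e; 0, 0, 1, c; 0, 0, 0, 1]

/-- `φ0 : UT(4,ℤ) → ℤ³`, `UT(a,b,c;d,e,f) ↦ (a,b,c)`. -/
def phi0 (M : Matrix (Fin 4) (Fin 4) ℤ) : Fin 3 → ℤ :=
  ![M 0 1, M 1 2, M 2 3]

/-- `φ0` followed by the embedding `ℤ³ → ℝ³`. -/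
def phi0R (M : Matrix (Fin 4) (Fin 4) ℤ) : Fin 3 → ℝ :=
  fun i => (phi0 M i : ℝ)

/-- `U_2 = {UT(0,0,0;0,0,f) : f ∈ ℤ}`. -/
def U2 : Set (Matrix (Fin 4) (Fin 4) ℤ) :=
  {M | ∃ f, M = UT 0 0 0 0 0 f}

lemma UT_mul (a b c d e f a' b' c' d' e' f' : ℤ) :
    UT a b c d e f * UT a' b' c' d' e' f' =
      UT (a + a') (b + b') (c + c') (d + d' + a * b') (e + e' + b * c')
        (f + f' + a * e' + d * c') := by
  ext i j
  fin_cases i <;> fin_cases j <;>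
    simp [UT, Matrix.mul_apply, Fin.sum_univ_four, Matrix.vecHead, Matrix.vecTail] <;> ring

lemma UT_one : UT 0 0 0 0 0 0 = 1 := by
  ext i j
  fin_cases i <;> fin_cases j <;> simp [UT, Matrix.one_apply, Matrix.vecHead, Matrix.vecTail]

lemma UT_congr {a b c d e f a' b' c' d' e' f' : ℤ} (h1 : a = a') (h2 : b = b')
    (h3 : c = c') (h4 : d = d') (h5 : e = e') (h6 : f = f') :
    UT a b c d e f = UT a' b' c' d' e' f' := by
  subst h1 h2 h3 h4 h5 h6; rfl

lemma UT_entries {a b c d e f a' b' c' d' e' f' : ℤ}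
    (h : UT a b c d e f = UT a' b' c' d' e' f') :
    a = a' ∧ b = b' ∧ c = c' ∧ d = d' ∧ e = e' := by
  refine ⟨?_, ?_, ?_, ?_, ?_⟩
  · simpa [UT] using congrFun (congrFun h 0) 1
  · simpa [UT] using congrFun (congrFun h 1) 2
  · simpa [UT] using congrFun (congrFun h 2) 3
  · simpa [UT] using congrFun (congrFun h 0) 2
  · simpa [UT] using congrFun (congrFun h 1) 3

section Aux

variable {ι : Type*}

def sF (g : ι → ℤ) : List ι → ℤ
  | [] => 0
  | x :: L => g x + sF g L

def XX (a b : ι → ℤ) : List ι → ℤ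
  | [] => 0
  | x :: L => XX a b L + a x * sF b L

lemma prod_UT (a b c d e f : ι → ℤ) (L : List ι) :
    ∃ F, (L.map fun i => UT (a i) (b i) (c i) (d i) (e i) (f i)).prod =
      UT (sF a L) (sF b L) (sF c L) (sF d L + XX a b L) (sF e L + XX b c L) F := by
  induction L with
  | nil => exact ⟨0, by simp [sF, XX, UT_one]⟩
  | cons x L ih =>
    obtain ⟨F, hF⟩ := ih
    refine ⟨f x + F + a x * (sF e L + XX b c L) + (d x) * sF c L, ?_⟩
    rw [List.map_cons, List.prod_cons, hF, UT_mul]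
    simp only [sF, XX]
    exact UT_congr rfl rfl rfl (by ring) (by ring) rfl

lemma lin_sum {a b c : ι → ℤ} {p q r : ℤ}
    (h : ∀ i, p * a i + q * b i + r * c i = 0) (L : List ι) :
    p * sF a L + q * sF b L + r * sF c L = 0 := by
  induction L with
  | nil => simp [sF]
  | cons x L ih => simp only [sF]; linear_combination h x + ih

lemma key {a b c : ι → ℤ} {p q r : ℤ}
    (h : ∀ i, p * a i + q * b i + r * c i = 0) (L : List ι) :
    2 * (p * XX a b L) - 2 * (r * XX b c L) =
      p * (sF a L * sF b L - sF (fun i => a i * b i) L)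
        - r * (sF b L * sF c L - sF (fun i => b i * c i) L) := by
  induction L with
  | nil => simp [XX, sF]
  | cons x L ih =>
    have h1 := lin_sum h L
    have h2 := h x
    simp only [XX, sF]
    linear_combination ih + sF b L * h2 - b x * h1

lemma sF_eq (g : ι → ℤ) (L : List ι) : sF g L = (L.map g).sum := by
  induction L with
  | nil => simp [sF]
  | cons x L ih => simp [sF, ih]

end Aux

lemma count_sum {k m : ℕ} (B : Fin m → Fin k) (ℓ : Fin k → ℕ)
    (hℓ : ∀ j, ℓ j = (Finset.univ.filter (fun i => B i = j)).card)
    (g : Fin k → ℤ) :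
    ∑ i, g (B i) = ∑ j, (ℓ j : ℤ) * g j := by
  classical
  calc ∑ i, g (B i)
      = ∑ j, ∑ i ∈ Finset.univ.filter (fun i => B i = j), g (B i) :=
        (Finset.sum_fiberwise _ _ _).symm
    _ = ∑ j, ∑ _i ∈ Finset.univ.filter (fun i => B i = j), g j := by
        refine Finset.sum_congr rfl fun j _ => Finset.sum_congr rfl fun i hi => ?_
        rw [(Finset.mem_filter.mp hi).2]
    _ = ∑ j, (ℓ j : ℤ) * g j := by
        refine Finset.sum_congr rfl fun j _ => ?_
        rw [Finset.sum_const, hℓ j, nsmul_eq_mul]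

lemma sF_finRange {k m : ℕ} (B : Fin m → Fin k) (g : Fin k → ℤ) :
    sF g ((List.finRange m).map B) = ∑ i, g (B i) := by
  rw [sF_eq, List.map_map, Fin.sum_univ_def]
  rfl

theorem stmt15 (k : ℕ) (α β κ δ ε φ : Fin k → ℤ)
    (A : Fin k → Matrix (Fin 4) (Fin 4) ℤ)
    (hA : ∀ i, A i = UT (α i) (β i) (κ i) (δ i) (ε i) (φ i))
    (hdim : Module.finrank ℝ
      (Submodule.span ℝ (Set.range (fun i => phi0R (A i)))) = 2)
    (p q r : ℤ) (hpqr : ¬(p = 0 ∧ q = 0 ∧ r = 0))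
    (hrel : ∀ i, p * α i + q * β i + r * κ i = 0)
    (m : ℕ) (B : Fin m → Fin k)
    (ℓ : Fin k → ℕ)
    (hℓ : ∀ j, ℓ j = (Finset.univ.filter (fun i => B i = j)).card)
    (hP : ((List.finRange m).map (fun i => A (B i))).prod ∈ U2) :
    (∑ i, (ℓ i : ℤ) • phi0 (A i) = 0) ∧
      (p : ℚ) * ∑ i, (ℓ i : ℚ) * ((δ i : ℚ) - (1 / 2) * (α i : ℚ) * (β i : ℚ))
        - (r : ℚ) * ∑ i, (ℓ i : ℚ) * ((ε i : ℚ) - (1 / 2) * (β i : ℚ) * (κ i : ℚ))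
        = 0 := by
  classical
  set L0 : List (Fin k) := (List.finRange m).map B with hL0
  -- rewrite the product
  obtain ⟨F, hF⟩ := prod_UT α β κ δ ε φ L0
  have hmap : ((List.finRange m).map (fun i => A (B i))).prod =
      (L0.map fun j => UT (α j) (β j) (κ j) (δ j) (ε j) (φ j)).prod := by
    rw [hL0, List.map_map]
    congr 1
    exact List.map_congr_left fun i _ => hA (B i)
  obtain ⟨f0, hf0⟩ := hP
  rw [hmap, hF] at hf0
  obtain ⟨hSA, hSB, hSC, hSD, hSE⟩ := UT_entries hf0
  -- convert list sums to weighted sums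
  have cs : ∀ g : Fin k → ℤ, sF g L0 = ∑ j, (ℓ j : ℤ) * g j := fun g => by
    rw [hL0, sF_finRange, count_sum B ℓ hℓ]
  have hα : ∑ j, (ℓ j : ℤ) * α j = 0 := by rw [← cs]; exact hSA
  have hβ : ∑ j, (ℓ j : ℤ) * β j = 0 := by rw [← cs]; exact hSB
  have hκ : ∑ j, (ℓ j : ℤ) * κ j = 0 := by rw [← cs]; exact hSC
  have hδ' : ∑ j, (ℓ j : ℤ) * δ j + XX α β L0 = 0 := by rw [← cs]; exact hSD
  have hε' : ∑ j, (ℓ j : ℤ) * ε j + XX β κ L0 = 0 := by rw [← cs]; exact hSE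
  have hk := key hrel L0
  simp only [cs] at hk
  -- the integer identity
  have hZ : 2 * p * (∑ j, (ℓ j : ℤ) * δ j) - p * (∑ j, (ℓ j : ℤ) * (α j * β j))
      - 2 * r * (∑ j, (ℓ j : ℤ) * ε j) + r * (∑ j, (ℓ j : ℤ) * (β j * κ j)) = 0 := by
    linear_combination -hk + 2 * p * hδ' - 2 * r * hε' - p * (∑ j, (ℓ j : ℤ) * β j) * hα
      + r * (∑ j, (ℓ j : ℤ) * β j) * hκ
  constructor
  · funext t
    rw [Finset.sum_apply]
    have hphi : ∀ (j : Fin k) (t : Fin 3),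
        phi0 (A j) t = ![α j, β j, κ j] t := by
      intro j t
      rw [hA]
      fin_cases t <;> simp [phi0, UT]
    simp only [Pi.smul_apply, smul_eq_mul, hphi]
    fin_cases t
    · simpa using hα
    · simpa using hβ
    · simpa using hκ
  · have q1 : ∑ i, (ℓ i : ℚ) * ((δ i : ℚ) - (1 / 2) * (α i : ℚ) * (β i : ℚ))
        = ((∑ j, (ℓ j : ℤ) * δ j : ℤ) : ℚ)
          - (1 / 2) * ((∑ j, (ℓ j : ℤ) * (α j * β j) : ℤ) : ℚ) := by
      push_cast
      rw [Finset.mul_sum, ← Finset.sum_sub_distrib]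
      exact Finset.sum_congr rfl fun i _ => by ring
    have q2 : ∑ i, (ℓ i : ℚ) * ((ε i : ℚ) - (1 / 2) * (β i : ℚ) * (κ i : ℚ))
        = ((∑ j, (ℓ j : ℤ) * ε j : ℤ) : ℚ)
          - (1 / 2) * ((∑ j, (ℓ j : ℤ) * (β j * κ j) : ℤ) : ℚ) := by
      push_cast
      rw [Finset.mul_sum, ← Finset.sum_sub_distrib]
      exact Finset.sum_congr rfl fun i _ => by ring
    have hZQ : (2 * p * (∑ j, (ℓ j : ℤ) * δ j) - p * (∑ j, (ℓ j : ℤ) * (α j * β j))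
        - 2 * r * (∑ j, (ℓ j : ℤ) * ε j) + r * (∑ j, (ℓ j : ℤ) * (β j * κ j)) : ℚ) = 0 := by
      exact_mod_cast congrArg (Int.cast : ℤ → ℚ) hZ
    rw [q1, q2]
    push_cast at hZQ ⊢
    linear_combination (1 / 2 : ℚ) * hZQ
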